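/- arXiv:2308.09382 — 2 statements merged into one kernel-verified Lean document; each statement's English description precedes it below -/
import Mathlib

section
/- Let G be a 3-graph with a symmetric pair {v_1,v_2} of codegree k >= a+b+1 (a,b >= 1). If (x_1, x_2, x_3, ..., x_m) is an optimal point for the Lagrangian of G (with coordinates x_1, x_2 at v_1, v_2), then the point assigning weight (x_1+x_2)/4 to each of v_1, v_1', v_2, v_2' and x_i to the remaining vertices is optimal for the Lagrangian of the (a,b)-mix-crossed blowup of G on {v_1, v_2}. -/
open Finset

/-- The Lagrangian polynomial of a hypergraph `H` on vertex set `V`. -/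
def lagPoly {V : Type*} [DecidableEq V] (H : Finset (Finset V)) (x : V → ℝ) : ℝ :=
  ∑ E ∈ H, ∏ i ∈ E, x i

/-- The set of values of the Lagrangian polynomial over the standard simplex;
the Lagrangian of `H` is the greatest element of this set. -/
def lagValues {V : Type*} [Fintype V] [DecidableEq V] (H : Finset (Finset V)) : Set ℝ :=
  lagPoly H '' stdSimplex ℝ V

/-- The codegree neighbourhood `N_G(v₁, v₂)` of a pair of vertices in a 3-graph. -/
def coNbhd {m : ℕ} (G : Finset (Finset (Fin m))) (v₁ v₂ : Fin m) : Finset (Fin m) :=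
  Finset.univ.filter (fun w => ({w, v₁, v₂} : Finset (Fin m)) ∈ G)

/-- The `(a,b)`-mix-crossed blowup of a 3-graph `G` on the pair `{v₁, v₂}`, where
`A, B, C` is the partition of `N_G(v₁, v₂)` into the three classes of sizes `a`, `b` and
`k - a - b`. The two new vertices are `Sum.inr 0 = v₁'` and `Sum.inr 1 = v₂'`: all edges
through both `v₁` and `v₂` are removed, `v₁'` and `v₂'` are clones of `v₁` and `v₂`, and
the prescribed new edges through `A`, `B`, `C` are added. -/
def mixBlowup {m : ℕ} (G : Finset (Finset (Fin m))) (v₁ v₂ : Fin m)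
    (A B C : Finset (Fin m)) : Finset (Finset (Fin m ⊕ Fin 2)) :=
  ((G.filter (fun E => ¬ (v₁ ∈ E ∧ v₂ ∈ E))).image (Finset.image Sum.inl))
  ∪ ((G.filter (fun E => v₁ ∈ E ∧ v₂ ∉ E)).image
      (fun E => insert (Sum.inr 0) ((E.erase v₁).image Sum.inl)))
  ∪ ((G.filter (fun E => v₂ ∈ E ∧ v₁ ∉ E)).image
      (fun E => insert (Sum.inr 1) ((E.erase v₂).image Sum.inl)))
  ∪ A.biUnion (fun w =>
      {{Sum.inl w, Sum.inl v₁, Sum.inl v₂}, {Sum.inl w, Sum.inl v₁, Sum.inr 1},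
       {Sum.inl w, Sum.inr 0, Sum.inl v₂}, {Sum.inl w, Sum.inr 0, Sum.inr 1}})
  ∪ B.biUnion (fun w =>
      {{Sum.inl w, Sum.inl v₁, Sum.inr 0}, {Sum.inl w, Sum.inl v₁, Sum.inr 1},
       {Sum.inl w, Sum.inl v₂, Sum.inr 0}, {Sum.inl w, Sum.inl v₂, Sum.inr 1}})
  ∪ C.biUnion (fun w =>
      {{Sum.inl w, Sum.inl v₁, Sum.inr 0}, {Sum.inl w, Sum.inl v₁, Sum.inl v₂},
       {Sum.inl w, Sum.inr 0, Sum.inr 1}, {Sum.inl w, Sum.inl v₂, Sum.inr 1}})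

/-! Let `σ` be the total weight that `z` puts on `v₁, v₂` and their clones `v₁', v₂'`.
Splitting the edges of the blowup into those meeting `{v₁, v₂, v₁', v₂'}` at most once and the
crossed edges through `A, B, C` gives

  `p_H(z) = P₀ + σ L + (z₁ + z₁')(z₂ + z₂') S_A + (z₁ + z₂)(z₁' + z₂') S_B`
  `           + (z₁ + z₂')(z₂ + z₁') S_C`,

where `P₀` collects the edges of `G` avoiding `v₁, v₂`, `L` is the common link polynomial of
`v₁` and `v₂` (the pair is symmetric) and `S_A, S_B, S_C` are the weights of `A, B, C`. By AM-GM
each crossed product is at most `σ² / 4`, which is exactly what `G` gets from the point putting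
`σ / 2` on both `v₁` and `v₂`; so `p_H(z) ≤ p_G(x)`. Conversely, spreading `x₁ + x₂` evenly over
the four vertices turns `x₁ x₂ (S_A + S_B + S_C)` into `((x₁ + x₂) / 2)² (S_A + S_B + S_C)`, so
`p_G(x) ≤ p_H(y)`. -/

section Lagrangian

variable {α β : Type*} [DecidableEq α] [DecidableEq β]

lemma sum_univ_eq_add_add_sum_compl {ι M : Type*} [Fintype ι] [DecidableEq ι]
    [AddCommMonoid M] {a b : ι} (hab : a ≠ b) (f : ι → M) :
    ∑ i, f i = f a + f b + ∑ i ∈ {a, b}ᶜ, f i := by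
  rw [← sum_add_sum_compl {a, b}, sum_pair hab]

lemma sum_union_union {ι M : Type*} [DecidableEq ι] [AddCommMonoid M] {A B C : Finset ι}
    (hAB : Disjoint A B) (hAC : Disjoint A C) (hBC : Disjoint B C) (f : ι → M) :
    ∑ i ∈ A ∪ B ∪ C, f i = ∑ i ∈ A, f i + ∑ i ∈ B, f i + ∑ i ∈ C, f i := by
  rw [sum_union (disjoint_union_left.mpr ⟨hAC, hBC⟩), sum_union hAB]

lemma lagPoly_congr {H : Finset (Finset α)} {u u' : α → ℝ}
    (h : ∀ E ∈ H, ∀ i ∈ E, u i = u' i) : lagPoly H u = lagPoly H u' :=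
  sum_congr rfl fun E hE => prod_congr rfl (h E hE)

lemma lagPoly_union {H K : Finset (Finset α)} (h : Disjoint H K) (u : α → ℝ) :
    lagPoly (H ∪ K) u = lagPoly H u + lagPoly K u :=
  sum_union h

lemma lagPoly_filter_not_add_lagPoly_filter (H : Finset (Finset α)) (P : Finset α → Prop)
    [DecidablePred P] (u : α → ℝ) :
    lagPoly (H.filter fun E => ¬P E) u + lagPoly (H.filter P) u = lagPoly H u :=
  sum_filter_not_add_sum_filter H P _

lemma lagPoly_image_image {f : α → β} (hf : Function.Injective f) (H : Finset (Finset α))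
    (z : β → ℝ) : lagPoly (H.image (image f)) z = lagPoly H (z ∘ f) := by
  rw [lagPoly, sum_image fun E _ E' _ h => image_injective hf h]
  exact sum_congr rfl fun E _ => prod_image fun i _ j _ h => hf h

def completeTripartite (X Y Z : Finset β) : Finset (Finset β) :=
  (X ×ˢ Y ×ˢ Z).image fun t => {t.1, t.2.1, t.2.2}

lemma triple_inter_eq_singleton {X Y Z : Finset β} (hXY : Disjoint X Y) (hXZ : Disjoint X Z)
    (hYZ : Disjoint Y Z) {a b c : β} (ha : a ∈ X) (hb : b ∈ Y) (hc : c ∈ Z) :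
    {a, b, c} ∩ X = {a} ∧ {a, b, c} ∩ Y = {b} ∧ {a, b, c} ∩ Z = {c} := by
  have hbX := disjoint_right.mp hXY hb
  have hcX := disjoint_right.mp hXZ hc
  have haY := disjoint_left.mp hXY ha
  have hcY := disjoint_right.mp hYZ hc
  have haZ := disjoint_left.mp hXZ ha
  have hbZ := disjoint_left.mp hYZ hb
  refine ⟨?_, ?_, ?_⟩ <;> ext d <;> simp only [mem_inter, mem_insert, mem_singleton] <;> aesop

lemma lagPoly_completeTripartite {X Y Z : Finset β} (hXY : Disjoint X Y) (hXZ : Disjoint X Z)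
    (hYZ : Disjoint Y Z) (z : β → ℝ) :
    lagPoly (completeTripartite X Y Z) z = (∑ x ∈ X, z x) * (∑ y ∈ Y, z y) * ∑ w ∈ Z, z w := by
  have hinj : Set.InjOn (fun t : β × β × β => ({t.1, t.2.1, t.2.2} : Finset β))
      (X ×ˢ Y ×ˢ Z : Finset _) := by
    rintro ⟨a, b, c⟩ ht ⟨a', b', c'⟩ ht' h
    simp only [coe_product, Set.mem_prod, mem_coe] at ht ht' h
    obtain ⟨hX, hY, hZ⟩ := triple_inter_eq_singleton hXY hXZ hYZ ht.1 ht.2.1 ht.2.2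
    obtain ⟨hX', hY', hZ'⟩ := triple_inter_eq_singleton hXY hXZ hYZ ht'.1 ht'.2.1 ht'.2.2
    rw [h, hX'] at hX
    rw [h, hY'] at hY
    rw [h, hZ'] at hZ
    simp_all
  have hsplit : (∑ x ∈ X, z x) * (∑ y ∈ Y, z y) * ∑ w ∈ Z, z w
      = ∑ a ∈ X, ∑ b ∈ Y, ∑ c ∈ Z, z a * z b * z c := by
    rw [sum_mul_sum, sum_mul]
    exact sum_congr rfl fun a _ => by rw [sum_mul]; exact sum_congr rfl fun b _ => mul_sum _ _ _
  rw [hsplit, lagPoly, completeTripartite, sum_image hinj, sum_product]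
  refine sum_congr rfl fun a ha => ?_
  rw [sum_product]
  refine sum_congr rfl fun b hb => sum_congr rfl fun c hc => ?_
  have hbc : b ≠ c := fun h => disjoint_left.mp hYZ hb (h ▸ hc)
  have ha' : a ∉ ({b, c} : Finset β) := by
    simp only [mem_insert, mem_singleton, not_or]
    exact ⟨fun h => disjoint_left.mp hXY ha (h ▸ hb), fun h => disjoint_left.mp hXZ ha (h ▸ hc)⟩
  rw [prod_insert ha', prod_pair hbc, mul_assoc]

lemma disjoint_completeTripartite {S X Y Z X' Y' Z' : Finset β} (hXX' : Disjoint X X')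
    (hXS : Disjoint X S) (hY' : Y' ⊆ S) (hZ' : Z' ⊆ S) :
    Disjoint (completeTripartite X Y Z) (completeTripartite X' Y' Z') := by
  simp only [disjoint_left, completeTripartite, mem_image, mem_product, not_exists, not_and]
  rintro _ ⟨⟨a, b, c⟩, ⟨ha, -, -⟩, rfl⟩ ⟨a', b', c'⟩ ⟨ha', hb', hc'⟩ h
  have : a ∈ ({a', b', c'} : Finset β) := h ▸ mem_insert_self _ _
  simp only [mem_insert, mem_singleton] at this
  rcases this with rfl | rfl | rfl
  exacts [disjoint_left.mp hXX' ha ha', disjoint_left.mp hXS ha (hY' hb'),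
    disjoint_left.mp hXS ha (hZ' hc')]

lemma disjoint_completeTripartite_of_card_inter_le_one {S : Finset β} {K : Finset (Finset β)}
    (hK : ∀ e ∈ K, (e ∩ S).card ≤ 1) {X Y Z : Finset β} (hY : Y ⊆ S) (hZ : Z ⊆ S)
    (hYZ : Disjoint Y Z) : Disjoint K (completeTripartite X Y Z) := by
  simp only [disjoint_right, completeTripartite, mem_image, mem_product]
  rintro _ ⟨⟨a, b, c⟩, ⟨-, hb, hc⟩, rfl⟩ he
  have := card_le_one.mp (hK _ he) b (by simp [hY hb]) c (by simp [hZ hc])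
  exact disjoint_left.mp hYZ hb (this ▸ hc)

lemma biUnion_eq_completeTripartite {ι : Type*} (f : ι → β) (s : Finset ι) (y₁ y₂ z₁ z₂ : β) :
    s.biUnion (fun i => {{f i, y₁, z₁}, {f i, y₁, z₂}, {f i, y₂, z₁}, {f i, y₂, z₂}})
      = completeTripartite (s.image f) {y₁, y₂} {z₁, z₂} := by
  ext e
  simp only [mem_biUnion, completeTripartite, mem_image, mem_product, mem_insert,
    mem_singleton, Prod.exists]
  aesop

def IsSymmetricPair (G : Finset (Finset α)) (p q : α) : Prop :=
  ∀ S : Finset α, p ∉ S → q ∉ S → (insert p S ∈ G ↔ insert q S ∈ G)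

def linkPoly (G : Finset (Finset α)) (p q : α) (u : α → ℝ) : ℝ :=
  ∑ E ∈ G.filter (fun E => p ∈ E ∧ q ∉ E), ∏ i ∈ E.erase p, u i

lemma lagPoly_filter_not_and (G : Finset (Finset α)) (p q : α) (u : α → ℝ) :
    lagPoly (G.filter fun E => ¬(p ∈ E ∧ q ∈ E)) u =
      lagPoly (G.filter fun E => p ∉ E ∧ q ∉ E) u + u p * linkPoly G p q u
        + u q * linkPoly G q p u := by
  simp only [lagPoly, linkPoly, sum_filter, mul_sum, ← sum_add_distrib]
  refine sum_congr rfl fun E _ => ?_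
  by_cases hp : p ∈ E <;> by_cases hq : q ∈ E <;> simp [hp, hq, mul_prod_erase]

lemma linkPoly_comm {G : Finset (Finset α)} {p q : α} (hpq : p ≠ q)
    (hsym : IsSymmetricPair G p q) (u : α → ℝ) :
    linkPoly G q p u = linkPoly G p q u := by
  refine sum_nbij' (fun E => insert p (E.erase q)) (fun E => insert q (E.erase p)) ?_ ?_ ?_ ?_ ?_
  · simp only [mem_filter]
    rintro E ⟨hE, hq, hp⟩
    refine ⟨?_, mem_insert_self _ _, by simp [hpq.symm]⟩
    rwa [hsym _ (by simp [hp]) (by simp), insert_erase hq]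
  · simp only [mem_filter]
    rintro E ⟨hE, hp, hq⟩
    refine ⟨?_, mem_insert_self _ _, by simp [hpq]⟩
    rwa [← hsym _ (by simp) (by simp [hq]), insert_erase hp]
  · simp only [mem_filter]
    rintro E ⟨-, hq, hp⟩
    rw [erase_insert (by simp [hp]), insert_erase hq]
  · simp only [mem_filter]
    rintro E ⟨-, hp, hq⟩
    rw [erase_insert (by simp [hq]), insert_erase hp]
  · simp only [mem_filter]
    rintro E ⟨-, -, hp⟩
    rw [erase_insert (by simp [hp])]

lemma lagPoly_image_insert_image_erase {f : α → β} (hf : Function.Injective f) {b : β}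
    (hb : ∀ a, f a ≠ b) (G : Finset (Finset α)) (p q : α) (z : β → ℝ) :
    lagPoly ((G.filter fun E => p ∈ E ∧ q ∉ E).image
      fun E => insert b ((E.erase p).image f)) z = z b * linkPoly G p q (z ∘ f) := by
  have hb' : ∀ E : Finset α, b ∉ E.image f := fun E => by simp [hb]
  have hinj : Set.InjOn (fun E : Finset α => insert b ((E.erase p).image f))
      ↑(G.filter fun E => p ∈ E ∧ q ∉ E) := by
    intro E hE E' hE' h
    simp only [mem_coe, mem_filter] at hE hE'
    have h' := congrArg (fun e => e.erase b) h
    simp only [erase_insert (hb' _)] at h'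
    rw [← insert_erase hE.2.1, ← insert_erase hE'.2.1, image_injective hf h']
  rw [lagPoly, linkPoly, sum_image hinj, mul_sum]
  refine sum_congr rfl fun E _ => ?_
  rw [prod_insert (hb' _), prod_image fun i _ j _ h => hf h]
  rfl

end Lagrangian

section ThreeGraph

variable {m : ℕ} {G : Finset (Finset (Fin m))} {p q : Fin m}

lemma ne_of_mem_coNbhd (hG3 : ∀ E ∈ G, E.card = 3) {w : Fin m} (hw : w ∈ coNbhd G p q) :
    w ≠ p ∧ w ≠ q := by
  simp only [coNbhd, mem_filter, mem_univ, true_and] at hw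
  have hw' : w ∉ ({p, q} : Finset (Fin m)) := fun h => by
    have h3 := hG3 _ hw
    rw [card_insert_of_mem h] at h3
    have := card_le_two (a := p) (b := q)
    omega
  simpa using hw'

lemma left_notMem_coNbhd (hG3 : ∀ E ∈ G, E.card = 3) : p ∉ coNbhd G p q :=
  fun h => (ne_of_mem_coNbhd hG3 h).1 rfl

lemma right_notMem_coNbhd (hG3 : ∀ E ∈ G, E.card = 3) : q ∉ coNbhd G p q :=
  fun h => (ne_of_mem_coNbhd hG3 h).2 rfl

lemma filter_mem_and_mem_eq_image_coNbhd (hG3 : ∀ E ∈ G, E.card = 3) (hpq : p ≠ q) :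
    G.filter (fun E => p ∈ E ∧ q ∈ E) = (coNbhd G p q).image fun w => {w, p, q} := by
  ext E
  simp only [mem_filter, mem_image, coNbhd, mem_univ, true_and]
  constructor
  · rintro ⟨hE, hp, hq⟩
    have hq' : q ∈ E.erase p := mem_erase.mpr ⟨hpq.symm, hq⟩
    obtain ⟨w, hw⟩ := card_eq_one.mp (show ((E.erase p).erase q).card = 1 by
      rw [card_erase_of_mem hq', card_erase_of_mem hp, hG3 E hE])
    have hE' : {w, p, q} = E := by
      rw [← insert_erase hp, ← insert_erase hq', hw]
      ext
      simp only [mem_insert, mem_singleton]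
      tauto
    exact ⟨w, hE'.symm ▸ hE, hE'⟩
  · rintro ⟨w, hw, rfl⟩
    simp [hw]

lemma lagPoly_filter_mem_and_mem (hG3 : ∀ E ∈ G, E.card = 3) (hpq : p ≠ q) (u : Fin m → ℝ) :
    lagPoly (G.filter fun E => p ∈ E ∧ q ∈ E) u = u p * u q * ∑ w ∈ coNbhd G p q, u w := by
  have hinj : Set.InjOn (fun w => ({w, p, q} : Finset (Fin m))) ↑(coNbhd G p q) := by
    intro w hw w' _ h
    replace h : ({w, p, q} : Finset (Fin m)) = {w', p, q} := h
    have hmem : w ∈ ({w', p, q} : Finset (Fin m)) := h ▸ mem_insert_self _ _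
    obtain ⟨hwp, hwq⟩ := ne_of_mem_coNbhd hG3 hw
    simpa [hwp, hwq] using hmem
  rw [filter_mem_and_mem_eq_image_coNbhd hG3 hpq, lagPoly, sum_image hinj, mul_sum]
  refine sum_congr rfl fun w hw => ?_
  obtain ⟨hwp, hwq⟩ := ne_of_mem_coNbhd hG3 hw
  rw [prod_insert (by simp [hwp, hwq]), prod_pair hpq]
  ring

lemma lagPoly_eq_of_isSymmetricPair (hG3 : ∀ E ∈ G, E.card = 3) (hpq : p ≠ q)
    (hsym : IsSymmetricPair G p q)
    {u u' : Fin m → ℝ} (huu' : ∀ i, i ≠ p → i ≠ q → u i = u' i) :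
    lagPoly G u = lagPoly (G.filter fun E => p ∉ E ∧ q ∉ E) u' + (u p + u q) * linkPoly G p q u'
      + u p * u q * ∑ w ∈ coNbhd G p q, u' w := by
  have havoid : lagPoly (G.filter fun E => p ∉ E ∧ q ∉ E) u
      = lagPoly (G.filter fun E => p ∉ E ∧ q ∉ E) u' :=
    lagPoly_congr fun E hE i hi => by
      rw [mem_filter] at hE
      exact huu' i (ne_of_mem_of_not_mem hi hE.2.1) (ne_of_mem_of_not_mem hi hE.2.2)
  have hlink : linkPoly G p q u = linkPoly G p q u' :=
    sum_congr rfl fun E hE => prod_congr rfl fun i hi => by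
      rw [mem_filter] at hE
      exact huu' i (ne_of_mem_erase hi) (ne_of_mem_of_not_mem (mem_of_mem_erase hi) hE.2.2)
  have hnbhd : ∑ w ∈ coNbhd G p q, u w = ∑ w ∈ coNbhd G p q, u' w :=
    sum_congr rfl fun w hw => huu' w (ne_of_mem_coNbhd hG3 hw).1 (ne_of_mem_coNbhd hG3 hw).2
  rw [← lagPoly_filter_not_add_lagPoly_filter G (fun E => p ∈ E ∧ q ∈ E),
    lagPoly_filter_not_and, lagPoly_filter_mem_and_mem hG3 hpq, linkPoly_comm hpq hsym,
    havoid, hlink, hnbhd]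
  ring

end ThreeGraph

section MixBlowup

open Sum

variable {m : ℕ} {G : Finset (Finset (Fin m))} {v₁ v₂ : Fin m} {A B C : Finset (Fin m)}

def clonedPair (v₁ v₂ : Fin m) : Finset (Fin m ⊕ Fin 2) := {inl v₁, inl v₂, inr 0, inr 1}

def cloneEdges (G : Finset (Finset (Fin m))) (v₁ v₂ : Fin m) : Finset (Finset (Fin m ⊕ Fin 2)) :=
  (G.filter fun E => ¬(v₁ ∈ E ∧ v₂ ∈ E)).image (image inl)
    ∪ (G.filter fun E => v₁ ∈ E ∧ v₂ ∉ E).image (fun E => insert (inr 0) ((E.erase v₁).image inl))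
    ∪ (G.filter fun E => v₂ ∈ E ∧ v₁ ∉ E).image (fun E => insert (inr 1) ((E.erase v₂).image inl))

def crossEdges (v₁ v₂ : Fin m) (A B C : Finset (Fin m)) : Finset (Finset (Fin m ⊕ Fin 2)) :=
  completeTripartite (A.image inl) {inl v₁, inr 0} {inl v₂, inr 1}
    ∪ completeTripartite (B.image inl) {inl v₁, inl v₂} {inr 0, inr 1}
    ∪ completeTripartite (C.image inl) {inl v₁, inr 1} {inr 0, inl v₂}

lemma mixBlowup_eq_cloneEdges_union_crossEdges :
    mixBlowup G v₁ v₂ A B C = cloneEdges G v₁ v₂ ∪ crossEdges v₁ v₂ A B C := by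
  rw [mixBlowup, cloneEdges, crossEdges, ← biUnion_eq_completeTripartite,
    ← biUnion_eq_completeTripartite, ← biUnion_eq_completeTripartite,
    pair_comm (inr 0 : Fin m ⊕ Fin 2) (inr 1), pair_comm (inl v₂ : Fin m ⊕ Fin 2) (inr 1)]
  simp only [union_assoc]

lemma card_inter_clonedPair_le_one {e : Finset (Fin m ⊕ Fin 2)}
    (he : e ∈ cloneEdges G v₁ v₂) : (e ∩ clonedPair v₁ v₂).card ≤ 1 := by
  rw [card_le_one]
  simp only [cloneEdges, mem_union, mem_image, mem_filter] at he
  rcases he with (⟨E, ⟨-, hE⟩, rfl⟩ | ⟨E, ⟨-, -, hE⟩, rfl⟩) | ⟨E, ⟨-, -, hE⟩, rfl⟩ <;>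
  · simp only [clonedPair, mem_inter, mem_image, mem_insert, mem_singleton, mem_erase]
    aesop

lemma disjoint_image_inl_clonedPair {s : Finset (Fin m)} (h₁ : v₁ ∉ s) (h₂ : v₂ ∉ s) :
    Disjoint (s.image inl) (clonedPair v₁ v₂) := by
  simp only [clonedPair, disjoint_left, mem_image, mem_insert, mem_singleton]
  rintro _ ⟨w, hw, rfl⟩
  simp only [inl.injEq, reduceCtorEq, or_false, not_or]
  exact ⟨fun h => h₁ (h ▸ hw), fun h => h₂ (h ▸ hw)⟩

lemma disjoint_cloneEdges_crossEdges (hne : v₁ ≠ v₂) :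
    Disjoint (cloneEdges G v₁ v₂) (crossEdges v₁ v₂ A B C) := by
  have hK : ∀ e ∈ cloneEdges G v₁ v₂, (e ∩ clonedPair v₁ v₂).card ≤ 1 :=
    fun _ => card_inter_clonedPair_le_one
  simp only [crossEdges, disjoint_union_right]
  refine ⟨⟨?_, ?_⟩, ?_⟩ <;>
    refine disjoint_completeTripartite_of_card_inter_le_one hK ?_ ?_ ?_ <;>
    simp [clonedPair, insert_subset_iff, hne.symm]

lemma lagPoly_cloneEdges (hne : v₁ ≠ v₂) (hsym : IsSymmetricPair G v₁ v₂)
    (z : Fin m ⊕ Fin 2 → ℝ) :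
    lagPoly (cloneEdges G v₁ v₂) z = lagPoly (G.filter fun E => v₁ ∉ E ∧ v₂ ∉ E) (z ∘ inl)
      + (z (inl v₁) + z (inl v₂) + z (inr 0) + z (inr 1)) * linkPoly G v₁ v₂ (z ∘ inl) := by
  rw [cloneEdges, lagPoly_union, lagPoly_union, lagPoly_image_image inl_injective,
    lagPoly_filter_not_and, lagPoly_image_insert_image_erase inl_injective fun _ => inl_ne_inr,
    lagPoly_image_insert_image_erase inl_injective fun _ => inl_ne_inr, linkPoly_comm hne hsym]
  · simp only [Function.comp_apply]
    ring
  · simp only [disjoint_right, mem_image]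
    rintro _ ⟨E, -, rfl⟩ ⟨E', -, h⟩
    simpa using congrArg (inr 0 ∈ ·) h
  · simp only [disjoint_right, mem_union, mem_image, not_or]
    rintro _ ⟨E, -, rfl⟩
    constructor <;> rintro ⟨E', -, h⟩ <;> simpa using congrArg (inr 1 ∈ ·) h

lemma lagPoly_crossEdges (hne : v₁ ≠ v₂) (hAB : Disjoint A B) (hAC : Disjoint A C)
    (hBC : Disjoint B C) (hv₁ : v₁ ∉ A ∪ B ∪ C) (hv₂ : v₂ ∉ A ∪ B ∪ C) (z : Fin m ⊕ Fin 2 → ℝ) :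
    lagPoly (crossEdges v₁ v₂ A B C) z =
      (∑ w ∈ A, z (inl w)) * (z (inl v₁) + z (inr 0)) * (z (inl v₂) + z (inr 1))
      + (∑ w ∈ B, z (inl w)) * (z (inl v₁) + z (inl v₂)) * (z (inr 0) + z (inr 1))
      + (∑ w ∈ C, z (inl w)) * (z (inl v₁) + z (inr 1)) * (z (inr 0) + z (inl v₂)) := by
  simp only [mem_union, not_or] at hv₁ hv₂
  have hAS := disjoint_image_inl_clonedPair hv₁.1.1 hv₂.1.1
  have hBS := disjoint_image_inl_clonedPair hv₁.1.2 hv₂.1.2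
  have hCS := disjoint_image_inl_clonedPair hv₁.2 hv₂.2
  have hYA : {inl v₁, inr 0} ⊆ clonedPair v₁ v₂ := by simp [clonedPair, insert_subset_iff]
  have hZA : {inl v₂, inr 1} ⊆ clonedPair v₁ v₂ := by simp [clonedPair, insert_subset_iff]
  have hYB : {inl v₁, inl v₂} ⊆ clonedPair v₁ v₂ := by simp [clonedPair, insert_subset_iff]
  have hZB : {inr 0, inr 1} ⊆ clonedPair v₁ v₂ := by simp [clonedPair, insert_subset_iff]
  have hYC : {inl v₁, inr 1} ⊆ clonedPair v₁ v₂ := by simp [clonedPair, insert_subset_iff]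
  have hZC : {inr 0, inl v₂} ⊆ clonedPair v₁ v₂ := by simp [clonedPair, insert_subset_iff]
  have hAB' := disjoint_completeTripartite (Y := {inl v₁, inr 0}) (Z := {inl v₂, inr 1})
    ((disjoint_image inl_injective).mpr hAB) hAS hYB hZB
  have hAC' := disjoint_completeTripartite (Y := {inl v₁, inr 0}) (Z := {inl v₂, inr 1})
    ((disjoint_image inl_injective).mpr hAC) hAS hYC hZC
  have hBC' := disjoint_completeTripartite (Y := {inl v₁, inl v₂}) (Z := {inr 0, inr 1})
    ((disjoint_image inl_injective).mpr hBC) hBS hYC hZC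
  rw [crossEdges, lagPoly_union (disjoint_union_left.mpr ⟨hAC', hBC'⟩), lagPoly_union hAB',
    lagPoly_completeTripartite (hAS.mono_right hYA) (hAS.mono_right hZA) (by simp [hne.symm]),
    lagPoly_completeTripartite (hBS.mono_right hYB) (hBS.mono_right hZB) (by simp),
    lagPoly_completeTripartite (hCS.mono_right hYC) (hCS.mono_right hZC) (by simp [hne.symm])]
  simp only [sum_image inl_injective.injOn, sum_pair inl_ne_inr, sum_pair (inl_injective.ne hne),
    sum_pair inr_ne_inl, sum_pair (inr_injective.ne (by decide : (0 : Fin 2) ≠ 1))]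

lemma lagPoly_mixBlowup (hne : v₁ ≠ v₂) (hsym : IsSymmetricPair G v₁ v₂) (hAB : Disjoint A B)
    (hAC : Disjoint A C) (hBC : Disjoint B C) (hv₁ : v₁ ∉ A ∪ B ∪ C) (hv₂ : v₂ ∉ A ∪ B ∪ C)
    (z : Fin m ⊕ Fin 2 → ℝ) :
    lagPoly (mixBlowup G v₁ v₂ A B C) z = lagPoly (G.filter fun E => v₁ ∉ E ∧ v₂ ∉ E) (z ∘ inl)
      + (z (inl v₁) + z (inl v₂) + z (inr 0) + z (inr 1)) * linkPoly G v₁ v₂ (z ∘ inl)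
      + (z (inl v₁) + z (inr 0)) * (z (inl v₂) + z (inr 1)) * ∑ w ∈ A, z (inl w)
      + (z (inl v₁) + z (inl v₂)) * (z (inr 0) + z (inr 1)) * ∑ w ∈ B, z (inl w)
      + (z (inl v₁) + z (inr 1)) * (z (inr 0) + z (inl v₂)) * ∑ w ∈ C, z (inl w) := by
  rw [mixBlowup_eq_cloneEdges_union_crossEdges, lagPoly_union (disjoint_cloneEdges_crossEdges hne),
    lagPoly_cloneEdges hne hsym, lagPoly_crossEdges hne hAB hAC hBC hv₁ hv₂]
  ring

noncomputable def mergeClones (v₁ v₂ : Fin m) (z : Fin m ⊕ Fin 2 → ℝ) : Fin m → ℝ := fun i =>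
  if i = v₁ ∨ i = v₂ then (z (inl v₁) + z (inl v₂) + z (inr 0) + z (inr 1)) / 2 else z (inl i)

noncomputable def splitClones (v₁ v₂ : Fin m) (x : Fin m → ℝ) : Fin m ⊕ Fin 2 → ℝ :=
  Sum.elim (fun i => if i = v₁ ∨ i = v₂ then (x v₁ + x v₂) / 4 else x i)
    (fun _ => (x v₁ + x v₂) / 4)

lemma mergeClones_mem_stdSimplex (hne : v₁ ≠ v₂) {z : Fin m ⊕ Fin 2 → ℝ}
    (hz : z ∈ stdSimplex ℝ (Fin m ⊕ Fin 2)) : mergeClones v₁ v₂ z ∈ stdSimplex ℝ (Fin m) := by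
  obtain ⟨hz0, hz1⟩ := hz
  refine ⟨fun i => ?_, ?_⟩
  · unfold mergeClones
    split_ifs
    · linarith [hz0 (inl v₁), hz0 (inl v₂), hz0 (inr 0), hz0 (inr 1)]
    · exact hz0 _
  · have hcompl : ∑ i ∈ {v₁, v₂}ᶜ, mergeClones v₁ v₂ z i = ∑ i ∈ {v₁, v₂}ᶜ, z (inl i) :=
      sum_congr rfl fun i hi => by simp_all [mergeClones]
    rw [Fintype.sum_sum_type, Fin.sum_univ_two, sum_univ_eq_add_add_sum_compl hne] at hz1
    rw [sum_univ_eq_add_add_sum_compl hne, hcompl]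
    simp only [mergeClones, true_or, or_true, if_true]
    linarith

lemma splitClones_nonneg {x : Fin m → ℝ} (hx : ∀ i, 0 ≤ x i) (i : Fin m ⊕ Fin 2) :
    0 ≤ splitClones v₁ v₂ x i := by
  have hc : 0 ≤ (x v₁ + x v₂) / 4 := by linarith [hx v₁, hx v₂]
  rcases i with i | j
  · simp only [splitClones, Sum.elim_inl]
    split_ifs
    exacts [hc, hx i]
  · exact hc

lemma splitClones_mem_stdSimplex (hne : v₁ ≠ v₂) {x : Fin m → ℝ}
    (hx : x ∈ stdSimplex ℝ (Fin m)) : splitClones v₁ v₂ x ∈ stdSimplex ℝ (Fin m ⊕ Fin 2) := by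
  obtain ⟨hx0, hx1⟩ := hx
  refine ⟨splitClones_nonneg hx0, ?_⟩
  have hcompl : ∑ i ∈ {v₁, v₂}ᶜ, splitClones v₁ v₂ x (inl i) = ∑ i ∈ {v₁, v₂}ᶜ, x i :=
    sum_congr rfl fun i hi => by simp_all [splitClones]
  rw [sum_univ_eq_add_add_sum_compl hne] at hx1
  rw [Fintype.sum_sum_type, Fin.sum_univ_two,
    sum_univ_eq_add_add_sum_compl hne fun i => splitClones v₁ v₂ x (inl i), hcompl]
  simp only [splitClones, Sum.elim_inl, Sum.elim_inr, true_or, or_true, if_true]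
  linarith

lemma lagPoly_mixBlowup_le_lagPoly_mergeClones (hG3 : ∀ E ∈ G, E.card = 3) (hne : v₁ ≠ v₂)
    (hsym : IsSymmetricPair G v₁ v₂) (hAB : Disjoint A B) (hAC : Disjoint A C) (hBC : Disjoint B C)
    (hunion : A ∪ B ∪ C = coNbhd G v₁ v₂) {z : Fin m ⊕ Fin 2 → ℝ} (hz : ∀ i, 0 ≤ z i) :
    lagPoly (mixBlowup G v₁ v₂ A B C) z ≤ lagPoly G (mergeClones v₁ v₂ z) := by
  rw [lagPoly_mixBlowup hne hsym hAB hAC hBC (hunion ▸ left_notMem_coNbhd hG3)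
      (hunion ▸ right_notMem_coNbhd hG3),
    lagPoly_eq_of_isSymmetricPair hG3 hne hsym (u' := z ∘ inl)
      fun i h₁ h₂ => by simp [mergeClones, h₁, h₂]]
  simp only [Function.comp_apply, ← hunion, sum_union_union hAB hAC hBC, mergeClones, true_or,
    or_true, if_true]
  have hA := sum_nonneg fun w (_ : w ∈ A) => hz (inl w)
  have hB := sum_nonneg fun w (_ : w ∈ B) => hz (inl w)
  have hC := sum_nonneg fun w (_ : w ∈ C) => hz (inl w)
  nlinarith [mul_le_mul_of_nonneg_right (four_mul_le_sq_add (z (inl v₁) + z (inr 0))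
      (z (inl v₂) + z (inr 1))) hA,
    mul_le_mul_of_nonneg_right (four_mul_le_sq_add (z (inl v₁) + z (inl v₂))
      (z (inr 0) + z (inr 1))) hB,
    mul_le_mul_of_nonneg_right (four_mul_le_sq_add (z (inl v₁) + z (inr 1))
      (z (inr 0) + z (inl v₂))) hC]

lemma lagPoly_le_lagPoly_mixBlowup_splitClones (hG3 : ∀ E ∈ G, E.card = 3) (hne : v₁ ≠ v₂)
    (hsym : IsSymmetricPair G v₁ v₂) (hAB : Disjoint A B) (hAC : Disjoint A C) (hBC : Disjoint B C)
    (hunion : A ∪ B ∪ C = coNbhd G v₁ v₂) {x : Fin m → ℝ} (hx : ∀ i, 0 ≤ x i) :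
    lagPoly G x ≤ lagPoly (mixBlowup G v₁ v₂ A B C) (splitClones v₁ v₂ x) := by
  set y := splitClones v₁ v₂ x
  rw [lagPoly_mixBlowup hne hsym hAB hAC hBC (hunion ▸ left_notMem_coNbhd hG3)
      (hunion ▸ right_notMem_coNbhd hG3),
    lagPoly_eq_of_isSymmetricPair hG3 hne hsym (u' := y ∘ inl)
      fun i h₁ h₂ => by simp [y, splitClones, h₁, h₂]]
  have hy := splitClones_nonneg (v₁ := v₁) (v₂ := v₂) hx
  have hA := sum_nonneg fun w (_ : w ∈ A) => hy (inl w)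
  have hB := sum_nonneg fun w (_ : w ∈ B) => hy (inl w)
  have hC := sum_nonneg fun w (_ : w ∈ C) => hy (inl w)
  have hy₁ : y (inl v₁) = (x v₁ + x v₂) / 4 := by simp [y, splitClones]
  have hy₂ : y (inl v₂) = (x v₁ + x v₂) / 4 := by simp [y, splitClones]
  have hy' : ∀ j, y (inr j) = (x v₁ + x v₂) / 4 := fun j => rfl
  simp only [Function.comp_apply, ← hunion, sum_union_union hAB hAC hBC, hy₁, hy₂, hy']
  nlinarith [mul_le_mul_of_nonneg_right (four_mul_le_sq_add (x v₁) (x v₂))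
    (add_nonneg (add_nonneg hA hB) hC)]

end MixBlowup

theorem mixBlowup_optimal_general {m : ℕ}
    (G : Finset (Finset (Fin m))) (hG3 : ∀ E ∈ G, E.card = 3)
    (v₁ v₂ : Fin m) (hne : v₁ ≠ v₂)
    (hsym : ∀ S : Finset (Fin m), v₁ ∉ S → v₂ ∉ S → (insert v₁ S ∈ G ↔ insert v₂ S ∈ G))
    (A B C : Finset (Fin m))
    (hAB : Disjoint A B) (hAC : Disjoint A C) (hBC : Disjoint B C)
    (hunion : A ∪ B ∪ C = coNbhd G v₁ v₂)
    (x : Fin m → ℝ) (hx : x ∈ stdSimplex ℝ (Fin m))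
    (hmax : ∀ z ∈ stdSimplex ℝ (Fin m), lagPoly G z ≤ lagPoly G x) :
    let y : Fin m ⊕ Fin 2 → ℝ :=
      Sum.elim (fun i => if i = v₁ ∨ i = v₂ then (x v₁ + x v₂) / 4 else x i)
        (fun _ => (x v₁ + x v₂) / 4)
    y ∈ stdSimplex ℝ (Fin m ⊕ Fin 2) ∧
      ∀ z ∈ stdSimplex ℝ (Fin m ⊕ Fin 2),
        lagPoly (mixBlowup G v₁ v₂ A B C) z ≤ lagPoly (mixBlowup G v₁ v₂ A B C) y := by
  refine ⟨splitClones_mem_stdSimplex hne hx, fun z hz => ?_⟩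
  calc lagPoly (mixBlowup G v₁ v₂ A B C) z
      ≤ lagPoly G (mergeClones v₁ v₂ z) :=
        lagPoly_mixBlowup_le_lagPoly_mergeClones hG3 hne hsym hAB hAC hBC hunion hz.1
    _ ≤ lagPoly G x := hmax _ (mergeClones_mem_stdSimplex hne hz)
    _ ≤ lagPoly (mixBlowup G v₁ v₂ A B C) (splitClones v₁ v₂ x) :=
        lagPoly_le_lagPoly_mixBlowup_splitClones hG3 hne hsym hAB hAC hBC hunion hx.1

/-- If `{v₁, v₂}` is a symmetric pair in a 3-graph `G` with codegree `k ≥ a + b + 1`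
(`a, b ≥ 1`), and `x` is an optimal point for the Lagrangian of `G`, then the point
assigning weight `(x v₁ + x v₂)/4` to each of `v₁, v₂, v₁', v₂'` and keeping the other
weights is an optimal point for the Lagrangian of the `(a,b)`-mix-crossed blowup. -/
theorem mixBlowup_optimal {m : ℕ} (a b : ℕ) (ha : 1 ≤ a) (hb : 1 ≤ b)
    (G : Finset (Finset (Fin m))) (hG3 : ∀ E ∈ G, E.card = 3)
    (v₁ v₂ : Fin m) (hne : v₁ ≠ v₂)
    (hsym : ∀ S : Finset (Fin m), v₁ ∉ S → v₂ ∉ S → (insert v₁ S ∈ G ↔ insert v₂ S ∈ G))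
    (A B C : Finset (Fin m))
    (hAB : Disjoint A B) (hAC : Disjoint A C) (hBC : Disjoint B C)
    (hunion : A ∪ B ∪ C = coNbhd G v₁ v₂)
    (hA : A.card = a) (hB : B.card = b) (hC : C.Nonempty)
    (x : Fin m → ℝ) (hx : x ∈ stdSimplex ℝ (Fin m))
    (hmax : ∀ z ∈ stdSimplex ℝ (Fin m), lagPoly G z ≤ lagPoly G x) :
    let y : Fin m ⊕ Fin 2 → ℝ :=
      Sum.elim (fun i => if i = v₁ ∨ i = v₂ then (x v₁ + x v₂) / 4 else x i)
        (fun _ => (x v₁ + x v₂) / 4)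
    y ∈ stdSimplex ℝ (Fin m ⊕ Fin 2) ∧
      ∀ z ∈ stdSimplex ℝ (Fin m ⊕ Fin 2),
        lagPoly (mixBlowup G v₁ v₂ A B C) z ≤ lagPoly (mixBlowup G v₁ v₂ A B C) y :=
  mixBlowup_optimal_general G hG3 v₁ v₂ hne hsym A B C hAB hAC hBC hunion x hx hmax
end

section
/- Let t >= 1 be an integer, a = 2/(3t+3+sqrt(9t^2+18t-3)) and b = 1/3 - t*a. Then 0 < a < 1/(3t), b > 0, 3t*a + 3*b = 1, and the point (a,...,a, b, b, b) with 3t copies of a lies on the standard simplex Delta_{3t+2} and is the unique maximizer of the Lagrangian polynomial of K_{3(t+1)}^{3-}. -/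
open Finset

/-- `K_{3(t+1)}^{3-}`: the complete 3-graph on `3t+3` vertices minus the single edge
consisting of the last three vertices. -/
def Kminus (t : ℕ) : Finset (Finset (Fin (3 * t + 3))) :=
  (Finset.univ.powersetCard 3).erase (Finset.univ.filter (fun i => 3 * t ≤ i.val))

open scoped BigOperators

/-!
Split the vertices into the core `[3t]` and the missing edge `B = {3t+1, 3t+2, 3t+3}`. Every
edge of `K_{3(t+1)}^{3-}` meets `B` in at most two vertices, so
`L(y) = e₃(y|core) + e₂(y|core) · Σ_B y + Σ_core y · e₂(y|B)`.
The Maclaurin bounds `e_k ≤ C(n, k) · mean^k` (for `k = 2` with equality only at constant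
vectors) bound `L(y)` by its value at the two-level point with the same means `α` on the core
and `β` on `B`. On the simplex `3tα + 3β = 1`, and this value becomes
`t/2 · (2α³ - (3t+3)α² + 2α)`, a cubic that on `[0, 1/(3t)]` is maximal exactly at its critical
point `a`, the smaller root of `3a² - (3t+3)a + 1`.
-/

theorem Nat.cast_choose_three {R : Type*} [Field R] [CharZero R] (n : ℕ) :
    (n.choose 3 : R) = n * (n - 1) * (n - 2) / 6 := by
  simp [Nat.cast_choose_eq_descPochhammer_div, descPochhammer_succ_right, Nat.factorial]

theorem choose_three_mul_mean_cube_add_le {R : Type*} [Field R] [LinearOrder R]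
    [IsStrictOrderedRing R] (n : ℕ) {S z : R} (hS : 0 ≤ S) (hz : 0 ≤ z) :
    n.choose 3 * (S / n) ^ 3 + z * (n.choose 2 * (S / n) ^ 2)
      ≤ (n + 1).choose 3 * ((z + S) / (n + 1 : ℕ)) ^ 3 := by
  rcases Nat.eq_zero_or_pos n with rfl | hn
  · simp [Nat.choose_eq_zero_of_lt]
  have hn : (1 : R) ≤ n := by exact_mod_cast hn
  have key : (n + 1) ^ 2 * ((n - 2) * S ^ 3 + 3 * n * z * S ^ 2) ≤ n ^ 3 * (z + S) ^ 3 := by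
    nlinarith [mul_nonneg (sq_nonneg (n * z - S))
      (by positivity : 0 ≤ n * (S + z) + 2 * (n + 1) * S)]
  rw [Nat.cast_choose_three, Nat.cast_choose_three, Nat.cast_choose_two]
  push_cast
  field_simp
  nlinarith [mul_le_mul_of_nonneg_left key (by linarith : (0 : R) ≤ n - 1)]

namespace Finset

variable {V R : Type*}

def esymm [CommSemiring R] (s : Finset V) (f : V → R) (k : ℕ) : R :=
  ∑ E ∈ s.powersetCard k, ∏ i ∈ E, f i

section CommSemiring

variable [CommSemiring R]

@[simp]
theorem esymm_zero (s : Finset V) (f : V → R) : s.esymm f 0 = 1 := by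
  simp [esymm]

theorem esymm_one (s : Finset V) (f : V → R) : s.esymm f 1 = ∑ i ∈ s, f i := by
  simp [esymm, powersetCard_one]

theorem esymm_eq_zero_of_card_lt {s : Finset V} {k : ℕ} (h : #s < k) (f : V → R) :
    s.esymm f k = 0 := by
  rw [esymm, powersetCard_eq_empty.2 h, sum_empty]

@[simp]
theorem esymm_empty (f : V → R) {k : ℕ} (hk : k ≠ 0) : (∅ : Finset V).esymm f k = 0 :=
  esymm_eq_zero_of_card_lt (by simpa [Nat.pos_iff_ne_zero]) f

theorem esymm_self (s : Finset V) (f : V → R) : s.esymm f #s = ∏ i ∈ s, f i := by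
  simp [esymm, powersetCard_self]

theorem esymm_const {s : Finset V} {f : V → R} {c : R} (hf : ∀ i ∈ s, f i = c) (k : ℕ) :
    s.esymm f k = (#s).choose k * c ^ k := by
  rw [esymm, sum_congr rfl fun E hE => ?_, sum_const, card_powersetCard, nsmul_eq_mul]
  rw [prod_congr rfl fun i hi => hf i ((mem_powersetCard.1 hE).1 hi), prod_const,
    (mem_powersetCard.1 hE).2]

theorem esymm_insert [DecidableEq V] {a : V} {s : Finset V} (h : a ∉ s) (f : V → R) (k : ℕ) :
    (insert a s).esymm f (k + 1) = s.esymm f (k + 1) + f a * s.esymm f k := by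
  have hE : ∀ E ∈ s.powersetCard k, a ∉ E := fun E hE ha => h ((mem_powersetCard.1 hE).1 ha)
  rw [esymm, powersetCard_succ_insert h, sum_union, sum_image, esymm, esymm, mul_sum]
  · exact congrArg _ (sum_congr rfl fun E hE' => prod_insert (hE E hE'))
  · exact fun E hE' F hF' => insert_erase_invOn.2.injOn (hE E hE') (hE F hF')
  · refine disjoint_left.2 fun E hE' hE'' => ?_
    obtain ⟨F, -, rfl⟩ := mem_image.1 hE''
    exact h ((mem_powersetCard.1 hE').1 (mem_insert_self a F))

theorem esymm_union [DecidableEq V] {s t : Finset V} (h : Disjoint s t) (f : V → R) (k : ℕ) :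
    (s ∪ t).esymm f k = ∑ p ∈ antidiagonal k, s.esymm f p.1 * t.esymm f p.2 := by
  induction t using Finset.induction_on generalizing k with
  | empty =>
    cases k <;> simp [Nat.sum_antidiagonal_succ']
  | insert a t ha ih =>
    obtain ⟨hst, has⟩ : Disjoint s t ∧ a ∉ s := by simpa [disjoint_insert_right, and_comm] using h
    cases k with
    | zero => simp
    | succ k =>
      rw [union_insert, esymm_insert (by simp [has, ha]), ih hst, ih hst,
        Nat.sum_antidiagonal_succ', Nat.sum_antidiagonal_succ', esymm_zero, esymm_zero]
      simp only [esymm_insert ha, mul_add, sum_add_distrib, mul_sum]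
      ring_nf

end CommSemiring

theorem two_mul_esymm_two [CommRing R] (s : Finset V) (f : V → R) :
    2 * s.esymm f 2 = (∑ i ∈ s, f i) ^ 2 - ∑ i ∈ s, f i ^ 2 := by
  classical
  induction s using Finset.induction_on with
  | empty => simp
  | insert a s ha ih =>
    rw [esymm_insert ha, esymm_one, sum_insert ha, sum_insert ha]
    linear_combination ih

section Maclaurin

variable [Field R] [LinearOrder R] [IsStrictOrderedRing R]

theorem choose_two_mul_expect_sq_sub_esymm_two (s : Finset V) (f : V → R) :
    (#s).choose 2 * (𝔼 i ∈ s, f i) ^ 2 - s.esymm f 2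
      = (∑ i ∈ s, (f i - 𝔼 j ∈ s, f j) ^ 2) / 2 := by
  rcases s.eq_empty_or_nonempty with rfl | hs
  · simp
  have hn : (#s : R) ≠ 0 := by simp [hs.ne_empty]
  have h2 := two_mul_esymm_two s f
  simp only [expect_eq_sum_div_card, Nat.cast_choose_two, sub_sq, sum_add_distrib,
    sum_sub_distrib, ← sum_mul, ← mul_sum, sum_const, nsmul_eq_mul]
  field_simp
  linear_combination (-#s : R) * h2

theorem esymm_two_le (s : Finset V) (f : V → R) :
    s.esymm f 2 ≤ (#s).choose 2 * (𝔼 i ∈ s, f i) ^ 2 := by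
  have := choose_two_mul_expect_sq_sub_esymm_two s f
  have : 0 ≤ ∑ i ∈ s, (f i - 𝔼 j ∈ s, f j) ^ 2 := by positivity
  linarith

theorem eq_expect_of_esymm_two_eq {s : Finset V} {f : V → R}
    (h : s.esymm f 2 = (#s).choose 2 * (𝔼 i ∈ s, f i) ^ 2) : ∀ i ∈ s, f i = 𝔼 j ∈ s, f j := by
  have hvar := choose_two_mul_expect_sq_sub_esymm_two s f
  rw [h, sub_self, eq_comm, div_eq_zero_iff, or_iff_left two_ne_zero,
    sum_eq_zero_iff_of_nonneg fun _ _ => sq_nonneg _] at hvar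
  exact fun i hi => sub_eq_zero.1 (pow_eq_zero_iff two_ne_zero |>.1 (hvar i hi))

theorem esymm_three_le {s : Finset V} {f : V → R} (hf : ∀ i ∈ s, 0 ≤ f i) :
    s.esymm f 3 ≤ (#s).choose 3 * (𝔼 i ∈ s, f i) ^ 3 := by
  classical
  rw [expect_eq_sum_div_card]
  induction s using Finset.induction_on with
  | empty => simp
  | insert a s ha ih =>
    have hfa : 0 ≤ f a := hf a (mem_insert_self a s)
    have hfs : ∀ i ∈ s, 0 ≤ f i := fun i hi => hf i (mem_insert_of_mem hi)
    have h2 : s.esymm f 2 ≤ (#s).choose 2 * ((∑ i ∈ s, f i) / #s) ^ 2 := by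
      simpa only [expect_eq_sum_div_card] using esymm_two_le s f
    rw [esymm_insert ha, card_insert_of_notMem ha, sum_insert ha]
    calc s.esymm f 3 + f a * s.esymm f 2
        ≤ (#s).choose 3 * ((∑ i ∈ s, f i) / #s) ^ 3
          + f a * ((#s).choose 2 * ((∑ i ∈ s, f i) / #s) ^ 2) :=
          add_le_add (ih hfs) (mul_le_mul_of_nonneg_left h2 hfa)
      _ ≤ _ := choose_three_mul_mean_cube_add_le #s (sum_nonneg hfs) hfa

end Maclaurin

end Finset

theorem cubic_lt_of_ne {R : Type*} [Field R] [LinearOrder R] [IsStrictOrderedRing R] {c a α : R}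
    (ha : 0 < a) (hc : c * a = 3 * a ^ 2 + 1) (hα : 2 * a * α < 1 - a ^ 2) (hne : α ≠ a) :
    2 * α ^ 3 - c * α ^ 2 + 2 * α < 2 * a ^ 3 - c * a ^ 2 + 2 * a := by
  have key : a * ((2 * a ^ 3 - c * a ^ 2 + 2 * a) - (2 * α ^ 3 - c * α ^ 2 + 2 * α))
      = (α - a) ^ 2 * (1 - a ^ 2 - 2 * a * α) := by
    linear_combination (α ^ 2 - a ^ 2) * hc
  have : 0 < (α - a) ^ 2 * (1 - a ^ 2 - 2 * a * α) :=
    mul_pos (sq_pos_of_ne_zero (sub_ne_zero.2 hne)) (by linarith)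
  have := (pos_iff_pos_of_mul_pos (key ▸ this)).1 ha
  linarith

namespace Kminus

variable {t : ℕ}

def core (t : ℕ) : Finset (Fin (3 * t + 3)) := univ.filter (fun i => i.val < 3 * t)

def missingEdge (t : ℕ) : Finset (Fin (3 * t + 3)) := univ.filter (fun i => 3 * t ≤ i.val)

theorem card_core : #(core t) = 3 * t := by
  simp [core, Fin.card_filter_val_lt]

theorem disjoint_core_missingEdge : Disjoint (core t) (missingEdge t) := by
  simp only [core, missingEdge, ← not_lt]
  exact disjoint_filter_filter_not _ _ _

theorem core_union_missingEdge : core t ∪ missingEdge t = univ := by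
  simp only [core, missingEdge, ← not_lt]
  exact filter_union_filter_not_eq _ _

theorem card_missingEdge : #(missingEdge t) = 3 := by
  have := card_union_of_disjoint (disjoint_core_missingEdge (t := t))
  rw [core_union_missingEdge, card_core, card_univ, Fintype.card_fin] at this
  omega

theorem sum_core_add_sum_missingEdge (y : Fin (3 * t + 3) → ℝ) :
    ∑ i ∈ core t, y i + ∑ i ∈ missingEdge t, y i = ∑ i, y i := by
  rw [← sum_union disjoint_core_missingEdge, core_union_missingEdge]

theorem lagPoly_eq (y : Fin (3 * t + 3) → ℝ) :
    lagPoly (Kminus t) y = (core t).esymm y 3 + (core t).esymm y 2 * ∑ i ∈ missingEdge t, y i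
      + (∑ i ∈ core t, y i) * (missingEdge t).esymm y 2 := by
  have hmem : missingEdge t ∈ univ.powersetCard 3 :=
    mem_powersetCard.2 ⟨subset_univ _, card_missingEdge⟩
  have hprod : ∏ i ∈ missingEdge t, y i = (missingEdge t).esymm y 3 := by
    rw [← esymm_self, card_missingEdge]
  rw [lagPoly, Kminus, ← missingEdge, sum_erase_eq_sub hmem, ← esymm, hprod,
    ← core_union_missingEdge, esymm_union disjoint_core_missingEdge]
  simp [Nat.sum_antidiagonal_succ, esymm_one]
  abel

def twoLevelPoint (t : ℕ) (a b : ℝ) : Fin (3 * t + 3) → ℝ :=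
  fun i => if (i : ℕ) < 3 * t then a else b

def profile (t : ℕ) (a b : ℝ) : ℝ :=
  (3 * t).choose 3 * a ^ 3 + 3 * b * (3 * t).choose 2 * a ^ 2 + 9 * a * b ^ 2 * t

theorem twoLevelPoint_of_mem_core {a b : ℝ} : ∀ i ∈ core t, twoLevelPoint t a b i = a :=
  fun _ hi => if_pos (mem_filter.1 hi).2

theorem twoLevelPoint_of_mem_missingEdge {a b : ℝ} :
    ∀ i ∈ missingEdge t, twoLevelPoint t a b i = b :=
  fun _ hi => if_neg (not_lt.2 (mem_filter.1 hi).2)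

theorem lagPoly_twoLevelPoint (a b : ℝ) :
    lagPoly (Kminus t) (twoLevelPoint t a b) = profile t a b := by
  rw [lagPoly_eq, esymm_const twoLevelPoint_of_mem_core, esymm_const twoLevelPoint_of_mem_core,
    esymm_const twoLevelPoint_of_mem_missingEdge, sum_congr rfl twoLevelPoint_of_mem_core,
    sum_congr rfl twoLevelPoint_of_mem_missingEdge, sum_const, sum_const, card_core,
    card_missingEdge, profile]
  norm_num [Nat.choose]
  ring

theorem twoLevelPoint_mem_stdSimplex {a b : ℝ} (ha : 0 ≤ a) (hb : 0 ≤ b)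
    (hab : 3 * t * a + 3 * b = 1) : twoLevelPoint t a b ∈ stdSimplex ℝ (Fin (3 * t + 3)) := by
  refine ⟨fun i => by unfold twoLevelPoint; split_ifs <;> assumption, ?_⟩
  rw [← sum_core_add_sum_missingEdge, sum_congr rfl twoLevelPoint_of_mem_core,
    sum_congr rfl twoLevelPoint_of_mem_missingEdge, sum_const, sum_const, card_core,
    card_missingEdge, ← hab]
  simp

theorem profile_eq_cubic {α β : ℝ} (h : 3 * t * α + 3 * β = 1) :
    profile t α β = t / 2 * (2 * α ^ 3 - (3 * t + 3) * α ^ 2 + 2 * α) := by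
  obtain rfl : β = (1 - 3 * t * α) / 3 := by linarith
  rw [profile, Nat.cast_choose_three, Nat.cast_choose_two]
  push_cast
  ring

theorem profile_sub_lagPoly (y : Fin (3 * t + 3) → ℝ) :
    profile t (𝔼 i ∈ core t, y i) (𝔼 i ∈ missingEdge t, y i) - lagPoly (Kminus t) y
      = ((3 * t).choose 3 * (𝔼 i ∈ core t, y i) ^ 3 - (core t).esymm y 3)
        + (∑ i ∈ missingEdge t, y i)
          * ((3 * t).choose 2 * (𝔼 i ∈ core t, y i) ^ 2 - (core t).esymm y 2)
        + (∑ i ∈ core t, y i)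
          * (3 * (𝔼 i ∈ missingEdge t, y i) ^ 2 - (missingEdge t).esymm y 2) := by
  rw [lagPoly_eq, profile, ← card_mul_expect (core t), ← card_mul_expect (missingEdge t),
    card_core, card_missingEdge]
  push_cast
  ring

theorem esymm_core_three_le {y : Fin (3 * t + 3) → ℝ} (hy : ∀ i, 0 ≤ y i) :
    (core t).esymm y 3 ≤ (3 * t).choose 3 * (𝔼 i ∈ core t, y i) ^ 3 := by
  simpa [card_core] using esymm_three_le (s := core t) fun i _ => hy i

theorem esymm_core_two_le (y : Fin (3 * t + 3) → ℝ) :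
    (core t).esymm y 2 ≤ (3 * t).choose 2 * (𝔼 i ∈ core t, y i) ^ 2 := by
  simpa [card_core] using esymm_two_le (core t) y

theorem esymm_missingEdge_two_le (y : Fin (3 * t + 3) → ℝ) :
    (missingEdge t).esymm y 2 ≤ 3 * (𝔼 i ∈ missingEdge t, y i) ^ 2 := by
  simpa [card_missingEdge] using esymm_two_le (missingEdge t) y

theorem lagPoly_le_profile {y : Fin (3 * t + 3) → ℝ} (hy : ∀ i, 0 ≤ y i) :
    lagPoly (Kminus t) y ≤ profile t (𝔼 i ∈ core t, y i) (𝔼 i ∈ missingEdge t, y i) := by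
  rw [← sub_nonneg, profile_sub_lagPoly]
  refine add_nonneg (add_nonneg (sub_nonneg.2 (esymm_core_three_le hy)) ?_) ?_
  · exact mul_nonneg (sum_nonneg fun i _ => hy i) (sub_nonneg.2 (esymm_core_two_le y))
  · exact mul_nonneg (sum_nonneg fun i _ => hy i) (sub_nonneg.2 (esymm_missingEdge_two_le y))

theorem eq_twoLevelPoint_of_lagPoly_eq_profile {y : Fin (3 * t + 3) → ℝ} (hy : ∀ i, 0 ≤ y i)
    (hα : 0 < 𝔼 i ∈ core t, y i) (hβ : 0 < 𝔼 i ∈ missingEdge t, y i)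
    (h : lagPoly (Kminus t) y = profile t (𝔼 i ∈ core t, y i) (𝔼 i ∈ missingEdge t, y i)) :
    y = twoLevelPoint t (𝔼 i ∈ core t, y i) (𝔼 i ∈ missingEdge t, y i) := by
  have hS : 0 < ∑ i ∈ core t, y i := by
    rcases (core t).eq_empty_or_nonempty with hc | hc
    · simp [hc] at hα
    · rw [← card_mul_expect]
      exact mul_pos (by exact_mod_cast hc.card_pos) hα
  have hp : 0 < ∑ i ∈ missingEdge t, y i := by
    rw [← card_mul_expect, card_missingEdge]
    positivity
  have h3 := sub_nonneg.2 (esymm_core_three_le hy)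
  have h2 := mul_nonneg hp.le (sub_nonneg.2 (esymm_core_two_le y))
  have h2' := mul_nonneg hS.le (sub_nonneg.2 (esymm_missingEdge_two_le y))
  have hsum := profile_sub_lagPoly y
  rw [← h, sub_self, eq_comm, add_eq_zero_iff_of_nonneg (add_nonneg h3 h2) h2',
    add_eq_zero_iff_of_nonneg h3 h2] at hsum
  obtain ⟨⟨-, hcore⟩, hedge⟩ := hsum
  rw [mul_eq_zero, or_iff_right hp.ne', sub_eq_zero, eq_comm] at hcore
  rw [mul_eq_zero, or_iff_right hS.ne', sub_eq_zero, eq_comm] at hedge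
  funext i
  rcases mem_union.1 (core_union_missingEdge ▸ mem_univ i) with hi | hi
  · rw [twoLevelPoint_of_mem_core i hi]
    exact eq_expect_of_esymm_two_eq (by rw [card_core]; exact hcore) i hi
  · rw [twoLevelPoint_of_mem_missingEdge i hi]
    exact eq_expect_of_esymm_two_eq (by simpa [card_missingEdge] using hedge) i hi

theorem lagPoly_lt_of_ne {a b : ℝ} (ha : 0 < a) (hta : 3 * t * a < 1)
    (hroot : (3 * t + 3) * a = 3 * a ^ 2 + 1) (hab : 3 * t * a + 3 * b = 1)
    {y : Fin (3 * t + 3) → ℝ} (hy : y ∈ stdSimplex ℝ (Fin (3 * t + 3)))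
    (hne : y ≠ twoLevelPoint t a b) :
    lagPoly (Kminus t) y < lagPoly (Kminus t) (twoLevelPoint t a b) := by
  obtain ⟨hy0, hy1⟩ := hy
  set α := 𝔼 i ∈ core t, y i
  set β := 𝔼 i ∈ missingEdge t, y i
  have hαβ : 3 * t * α + 3 * β = 1 := by
    rw [← hy1, ← sum_core_add_sum_missingEdge, ← card_mul_expect, ← card_mul_expect, card_core,
      card_missingEdge]
    push_cast
    ring
  have hβ : 0 ≤ β := expect_nonneg fun i _ => hy0 i
  -- for `t = 0` the root equation would read `3a² - 3a + 1 = 0`, which has no real solution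
  have ht : (1 : ℝ) ≤ t := by
    rcases Nat.eq_zero_or_pos t with rfl | ht
    · norm_num at hroot
      nlinarith [sq_nonneg (2 * a - 1)]
    · exact_mod_cast ht
  rw [lagPoly_twoLevelPoint]
  by_cases hαa : α = a
  · have hβb : β = b := by rw [hαa] at hαβ; linarith
    refine hαa ▸ hβb ▸ (lagPoly_le_profile hy0).lt_of_ne fun h => hne ?_
    rw [eq_twoLevelPoint_of_lagPoly_eq_profile hy0 (by linarith) (by linarith) h]
    exact congrArg₂ (twoLevelPoint t) hαa hβb
  have hbound : 2 * a * α < 1 - a ^ 2 := by nlinarith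
  calc lagPoly (Kminus t) y ≤ profile t α β := lagPoly_le_profile hy0
    _ = t / 2 * (2 * α ^ 3 - (3 * t + 3) * α ^ 2 + 2 * α) := profile_eq_cubic hαβ
    _ < t / 2 * (2 * a ^ 3 - (3 * t + 3) * a ^ 2 + 2 * a) :=
      mul_lt_mul_of_pos_left (cubic_lt_of_ne ha hroot hbound hαa) (by positivity)
    _ = profile t a b := (profile_eq_cubic hab).symm

theorem smallRoot_spec {t a : ℝ} (ht : 1 ≤ t)
    (ha : a = 2 / (3 * t + 3 + Real.sqrt (9 * t ^ 2 + 18 * t - 3))) :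
    0 < a ∧ 3 * t * a < 1 ∧ (3 * t + 3) * a = 3 * a ^ 2 + 1 := by
  set r := Real.sqrt (9 * t ^ 2 + 18 * t - 3)
  have hr : 0 ≤ r := Real.sqrt_nonneg _
  have hr2 : r ^ 2 = 9 * t ^ 2 + 18 * t - 3 := Real.sq_sqrt (by nlinarith)
  have hmul : a * (3 * t + 3 + r) = 2 := by rw [ha]; field_simp
  refine ⟨by rw [ha]; positivity, ?_, ?_⟩
  · have : 3 * t - 3 < r := by nlinarith
    nlinarith
  · have har : a * r = 2 - (3 * t + 3) * a := by linear_combination hmul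
    have : a ^ 2 * (9 * t ^ 2 + 18 * t - 3) = (2 - (3 * t + 3) * a) ^ 2 := by
      rw [← hr2, ← har]; ring
    linear_combination this / 4

end Kminus

/-- With `a = 2/(3t + 3 + √(9t² + 18t - 3))` and `b = 1/3 - t·a`: `0 < a < 1/(3t)`,
`b > 0`, `3t·a + 3b = 1`, and the point assigning `a` to the first `3t` vertices and `b`
to the last three lies on the simplex and is the unique maximizer of the Lagrangian
polynomial of `K_{3(t+1)}^{3-}`. -/
theorem Kminus_unique_optimum (t : ℕ) (ht : 1 ≤ t) :
    let a : ℝ := 2 / (3 * t + 3 + Real.sqrt (9 * (t : ℝ) ^ 2 + 18 * t - 3))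
    let b : ℝ := 1 / 3 - t * a
    let x : Fin (3 * t + 3) → ℝ := fun i => if (i : ℕ) < 3 * t then a else b
    0 < a ∧ a < 1 / (3 * t) ∧ 0 < b ∧ 3 * t * a + 3 * b = 1 ∧
      x ∈ stdSimplex ℝ (Fin (3 * t + 3)) ∧
      (∀ y ∈ stdSimplex ℝ (Fin (3 * t + 3)), lagPoly (Kminus t) y ≤ lagPoly (Kminus t) x) ∧
      (∀ y ∈ stdSimplex ℝ (Fin (3 * t + 3)),
        lagPoly (Kminus t) y = lagPoly (Kminus t) x → y = x) := by
  intro a b x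
  obtain ⟨ha, hta, hroot⟩ := Kminus.smallRoot_spec (t := t) (by exact_mod_cast ht) (a := a) rfl
  have hab : 3 * t * a + 3 * b = 1 := by simp only [b]; ring
  have hb : 0 < b := by linarith
  have hlt : ∀ y ∈ stdSimplex ℝ (Fin (3 * t + 3)), y ≠ x →
      lagPoly (Kminus t) y < lagPoly (Kminus t) x :=
    fun y hy => Kminus.lagPoly_lt_of_ne ha hta hroot hab hy
  refine ⟨ha, ?_, hb, hab, Kminus.twoLevelPoint_mem_stdSimplex ha.le hb.le hab, fun y hy => ?_,
    fun y hy hyx => by_contra fun hne => (hlt y hy hne).ne hyx⟩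
  · rw [lt_div_iff₀ (by positivity)]
    linarith
  · by_cases hyx : y = x
    · rw [hyx]
    · exact (hlt y hy hyx).le
end
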